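/- arXiv:1312.4187 — 2 statements merged into one kernel-verified Lean document; each statement's English description precedes it below -/
import Mathlib

section
/- Let G be a finite two-player constant-sum game with payoff functions u1, u2, and let G' be a game with the same action sets and payoff functions u1', u2' such that u1'(a,b) ≥ u1(a,b) for all action pairs (a,b) (while u2' may differ arbitrarily from u2). Then for every mixed-strategy Nash equilibrium (σ,τ) of G and every mixed-strategy Nash equilibrium (σ',τ') of G', player 1's expected payoff in G' at (σ',τ') is at least player 1's expected payoff in G at (σ,τ). In particular, player 1's utility in equilibrium in G' cannot be lower than in G. -/
/-- `σ` is a mixed strategy: a probability distribution on the finite action set `A`. -/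
def IsMixed {A : Type*} [Fintype A] (σ : A → ℝ) : Prop :=
  (∀ a, 0 ≤ σ a) ∧ ∑ a, σ a = 1

/-- Expected payoff `U(σ,τ) = Σ_a Σ_b σ(a)·τ(b)·u(a,b)`. -/
def expPayoff {A B : Type*} [Fintype A] [Fintype B]
    (u : A → B → ℝ) (σ : A → ℝ) (τ : B → ℝ) : ℝ :=
  ∑ a, ∑ b, σ a * τ b * u a b

/-- `(σ,τ)` is a mixed-strategy Nash equilibrium of the two-player game `(u1,u2)`. -/
def IsNash {A B : Type*} [Fintype A] [Fintype B]
    (u1 u2 : A → B → ℝ) (σ : A → ℝ) (τ : B → ℝ) : Prop :=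
  IsMixed σ ∧ IsMixed τ ∧
    (∀ σ', IsMixed σ' → expPayoff u1 σ' τ ≤ expPayoff u1 σ τ) ∧
    (∀ τ', IsMixed τ' → expPayoff u2 σ τ' ≤ expPayoff u2 σ τ)

/-- If `G = (u1,u2)` is constant-sum and `G' = (u1',u2')` has `u1' ≥ u1` pointwise
(`u2'` arbitrary), then player 1's payoff in any equilibrium of `G'` is at least his
payoff in any equilibrium of `G`. -/
theorem player1_cannot_lose_constant_sum
    {A B : Type*} [Fintype A] [Fintype B] [Nonempty A] [Nonempty B]
    (u1 u2 u1' u2' : A → B → ℝ) (k : ℝ)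
    (hconst : ∀ a b, u1 a b + u2 a b = k)
    (himp : ∀ a b, u1 a b ≤ u1' a b)
    (σ : A → ℝ) (τ : B → ℝ) (hN : IsNash u1 u2 σ τ)
    (σ' : A → ℝ) (τ' : B → ℝ) (hN' : IsNash u1' u2' σ' τ') :
    expPayoff u1 σ τ ≤ expPayoff u1' σ' τ' := by
  obtain ⟨hσ, hτ, hbr1, hbr2⟩ := hN
  obtain ⟨hσ', hτ', hbr1', hbr2'⟩ := hN'
  -- constant sum identity
  have hsum : ∀ t : B → ℝ, IsMixed t →
      expPayoff u1 σ t + expPayoff u2 σ t = k := by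
    intro t ht
    unfold expPayoff
    rw [← Finset.sum_add_distrib]
    have : ∀ a ∈ Finset.univ, (∑ b, σ a * t b * u1 a b) + (∑ b, σ a * t b * u2 a b)
        = σ a * k := by
      intro a _
      rw [← Finset.sum_add_distrib]
      have : ∀ b ∈ Finset.univ, σ a * t b * u1 a b + σ a * t b * u2 a b
          = σ a * t b * k := by
        intro b _
        rw [← mul_add, hconst]
      rw [Finset.sum_congr rfl this]
      simp only [mul_assoc, ← Finset.mul_sum, ← Finset.sum_mul]
      rw [ht.2]; ring
    rw [Finset.sum_congr rfl this, ← Finset.sum_mul, hσ.2, one_mul]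
  -- step 1: U1(σ,τ) ≤ U1(σ,τ')
  have h1 : expPayoff u1 σ τ ≤ expPayoff u1 σ τ' := by
    have h2 := hbr2 τ' hτ'
    have e1 := hsum τ hτ
    have e2 := hsum τ' hτ'
    linarith
  -- step 2: U1(σ,τ') ≤ U1'(σ,τ')
  have h2 : expPayoff u1 σ τ' ≤ expPayoff u1' σ τ' := by
    unfold expPayoff
    apply Finset.sum_le_sum
    intro a _
    apply Finset.sum_le_sum
    intro b _
    have := mul_nonneg (hσ.1 a) (hτ'.1 b)
    exact mul_le_mul_of_nonneg_left (himp a b) this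
  have h3 := hbr1' σ hσ
  linarith
end

section
/- Let A, B be finite nonempty action sets and v1, v2 : A × B → ℝ payoffs with v1(a,b) + v2(a,b) = k for all (a,b) (a constant-sum base game). Let c1 : A → ℝ and c2 : B → ℝ be cost functions with c2 constant (c2(b) = c for all b). Define the game G^c by u1(a,b) = v1(a,b) − c1(a) and u2(a,b) = v2(a,b) − c2(b). Let c1' : A → ℝ satisfy c1'(a) ≤ c1(a) for all a, and define G^{c'} by u1'(a,b) = v1(a,b) − c1'(a) and the same u2. Then for every mixed-strategy Nash equilibrium (σ,τ) of G^c and every mixed-strategy Nash equilibrium (σ',τ') of G^{c'}, player 1's expected payoff in G^{c'} at (σ',τ') is at least player 1's expected payoff in G^c at (σ,τ); in particular, player 1 cannot lose in equilibrium from a local improvement of his cost function. -/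
lemma expPayoff_sub_left {A B : Type*} [Fintype A] [Fintype B]
    (v : A → B → ℝ) (c1 : A → ℝ) (σ : A → ℝ) (τ : B → ℝ) (hτ : ∑ b, τ b = 1) :
    expPayoff (fun a b => v a b - c1 a) σ τ = expPayoff v σ τ - ∑ a, σ a * c1 a := by
  unfold expPayoff
  rw [← Finset.sum_sub_distrib]
  congr 1; funext a
  have h : σ a * c1 a = ∑ b, σ a * τ b * c1 a := by
    rw [← Finset.sum_mul, ← Finset.mul_sum, hτ, mul_one]
  rw [h, ← Finset.sum_sub_distrib]
  congr 1; funext b; ring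

lemma expPayoff_v2 {A B : Type*} [Fintype A] [Fintype B]
    (v1 : A → B → ℝ) (k c : ℝ) (σ : A → ℝ) (τ : B → ℝ)
    (hσ : ∑ a, σ a = 1) (hτ : ∑ b, τ b = 1) :
    expPayoff (fun a b => (k - v1 a b) - c) σ τ = (k - c) - expPayoff v1 σ τ := by
  unfold expPayoff
  have h1 : ∑ a, ∑ b, σ a * τ b * ((k - v1 a b) - c)
      = ∑ a, ∑ b, (σ a * τ b * (k - c) - σ a * τ b * v1 a b) := by
    congr 1; funext a; congr 1; funext b; ring
  rw [h1]
  have h2 : ∑ a, ∑ b, σ a * τ b * (k - c) = k - c := by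
    simp only [← Finset.sum_mul, ← Finset.mul_sum]
    rw [hσ, hτ]; ring
  simp [Finset.sum_sub_distrib, h2]

/-- Constant-sum base game `(v1,v2)` with costs `c1` for player 1 and a constant cost
`c2 = c` for player 2.  Improving player 1's cost function from `c1` to `c1' ≤ c1`
cannot lower player 1's payoff in equilibrium. -/
theorem player1_cannot_lose_cost_improvement
    {A B : Type*} [Fintype A] [Fintype B] [Nonempty A] [Nonempty B]
    (v1 v2 : A → B → ℝ) (k : ℝ)
    (hconst : ∀ a b, v1 a b + v2 a b = k)
    (c1 : A → ℝ) (c2 : B → ℝ) (c : ℝ) (hc2 : ∀ b, c2 b = c)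
    (c1' : A → ℝ) (himp : ∀ a, c1' a ≤ c1 a)
    (σ : A → ℝ) (τ : B → ℝ)
    (hN : IsNash (fun a b => v1 a b - c1 a) (fun a b => v2 a b - c2 b) σ τ)
    (σ' : A → ℝ) (τ' : B → ℝ)
    (hN' : IsNash (fun a b => v1 a b - c1' a) (fun a b => v2 a b - c2 b) σ' τ') :
    expPayoff (fun a b => v1 a b - c1 a) σ τ ≤
      expPayoff (fun a b => v1 a b - c1' a) σ' τ' := by
  obtain ⟨hσ, hτ, h1, h2⟩ := hN
  obtain ⟨hσ', hτ', h1', h2'⟩ := hN'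
  -- rewrite u2 in terms of v1
  have hv2 : (fun a b => v2 a b - c2 b) = fun (a:A) (b:B) => (k - v1 a b) - c := by
    funext a b; rw [hc2, ← hconst a b]; ring
  -- Step A: expPayoff v1 σ τ ≤ expPayoff v1 σ τ'
  have hA : expPayoff v1 σ τ ≤ expPayoff v1 σ τ' := by
    have := h2 τ' hτ'
    rw [hv2, expPayoff_v2 v1 k c σ τ' hσ.2 hτ'.2, expPayoff_v2 v1 k c σ τ hσ.2 hτ.2] at this
    linarith
  have step1 : expPayoff (fun a b => v1 a b - c1 a) σ τ
      ≤ expPayoff (fun a b => v1 a b - c1 a) σ τ' := by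
    rw [expPayoff_sub_left v1 c1 σ τ hτ.2, expPayoff_sub_left v1 c1 σ τ' hτ'.2]
    linarith
  have step2 : expPayoff (fun a b => v1 a b - c1 a) σ τ'
      ≤ expPayoff (fun a b => v1 a b - c1' a) σ τ' := by
    unfold expPayoff
    refine Finset.sum_le_sum fun a _ => Finset.sum_le_sum fun b _ => ?_
    have := mul_nonneg (hσ.1 a) (hτ'.1 b)
    have := himp a
    show σ a * τ' b * (v1 a b - c1 a) ≤ σ a * τ' b * (v1 a b - c1' a)
    nlinarith
  have step3 := h1' σ hσ
  linarith
end
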